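/- The q-exponential E_q(x; a, b) = \sum_{n\ge 0} (q^{n^2/4}/(q;q)_n) \psi_n(a, x) b^n is an eigenfunction of \tau with eigenvalue a b q^{-1/4}: \tau E_q(\cdot; a, b) = a b q^{-1/4} E_q(\cdot; a, b). -/

import Mathlib

open Finset Complex

/-- The q-shifted factorial `(c;q)_n`. -/
noncomputable def qpg (c q : ℂ) (n : ℕ) : ℂ := ∏ k ∈ range n, (1 - c * q ^ k)

/-- `(q;q)_n`. -/
noncomputable def qp (q : ℂ) (n : ℕ) : ℂ := ∏ k ∈ range n, (1 - q ^ (k + 1))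

/-- `ψ_n(a, x) = (a q^{(1-n)/2} z; q)_n (a q^{(1-n)/2} z⁻¹; q)_n` with
`x = (z + z⁻¹)/2` and `q = s⁴` (so `q^{(1-n)/2} = s^{2-2n}`). -/
noncomputable def psi4 (a s : ℂ) (n : ℕ) (z : ℂ) : ℂ :=
  qpg (a * s ^ (2 - 2 * (n : ℤ)) * z) (s ^ 4) n *
    qpg (a * s ^ (2 - 2 * (n : ℤ)) * z⁻¹) (s ^ 4) n

/-- The q-exponential `E_q(x; a, b) = ∑ₙ (q^{n²/4}/(q;q)ₙ) ψ_n(a,x) bⁿ` with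
`q = s⁴` (so `q^{n²/4} = s^{n²}`). -/
noncomputable def qExpE (a b s z : ℂ) : ℂ :=
  ∑' n : ℕ, s ^ (n ^ 2) * psi4 a s n z * b ^ n / qp (s ^ 4) n

lemma qpg_last (c q : ℂ) (n : ℕ) : qpg c q (n+1) = qpg c q n * (1 - c * q ^ n) := by
  simp [qpg, Finset.prod_range_succ]

lemma qpg_first (c q : ℂ) (n : ℕ) : qpg c q (n+1) = qpg (c*q) q n * (1 - c) := by
  unfold qpg
  rw [Finset.prod_range_succ']
  simp only [pow_zero, mul_one]
  congr 1
  refine Finset.prod_congr rfl fun k _ => ?_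
  rw [pow_succ']
  ring

lemma psi_step (s z a : ℂ) (hs : s ≠ 0) (hz : z ≠ 0) (n : ℕ) :
    psi4 a s (n+1) (s^2*z) - psi4 a s (n+1) (z / s^2)
      = a * ((s^(2*n+2))⁻¹ - s^(2*n+2)) * (z - z⁻¹) * psi4 a s n z := by
  have h2 : s^2 ≠ 0 := pow_ne_zero _ hs
  have hm : s^(2*n+2) ≠ 0 := pow_ne_zero _ hs
  have hneg2 : s ^ (-2:ℤ) = (s^2)⁻¹ := by rw [zpow_neg]; norm_cast
  have e1 : a * s ^ (2 - 2 * ((n+1 : ℕ) : ℤ)) * (s^2*z) = a * s ^ (2 - 2 * (n : ℤ)) * z := by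
    have h : ((2:ℤ) - 2 * ((n+1 : ℕ) : ℤ)) = (2 - 2 * (n : ℤ)) + (-2) := by push_cast; ring
    rw [h, zpow_add₀ hs, hneg2]
    field_simp
  have e2 : a * s ^ (2 - 2 * ((n+1 : ℕ) : ℤ)) * (s^2*z)⁻¹ = a * (s^(2*n+2))⁻¹ * z⁻¹ := by
    have h : ((2:ℤ) - 2 * ((n+1 : ℕ) : ℤ)) = -((2*n+2 : ℕ) : ℤ) + 2 := by push_cast; ring
    rw [mul_inv, h, zpow_add₀ hs, zpow_neg, zpow_natCast, zpow_two]
    field_simp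
  have e3 : a * s ^ (2 - 2 * ((n+1 : ℕ) : ℤ)) * (z / s^2) = a * (s^(2*n+2))⁻¹ * z := by
    have h : ((2:ℤ) - 2 * ((n+1 : ℕ) : ℤ)) = -((2*n+2 : ℕ) : ℤ) + 2 := by push_cast; ring
    rw [h, zpow_add₀ hs, zpow_neg, zpow_natCast, zpow_two]
    field_simp
  have e4 : a * s ^ (2 - 2 * ((n+1 : ℕ) : ℤ)) * (z / s^2)⁻¹ = a * s ^ (2 - 2 * (n : ℤ)) * z⁻¹ := by
    have h : ((2:ℤ) - 2 * ((n+1 : ℕ) : ℤ)) = (2 - 2 * (n : ℤ)) + (-2) := by push_cast; ring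
    rw [h, zpow_add₀ hs, hneg2]
    field_simp
  have e5 : ∀ w : ℂ, a * s ^ (2 - 2 * (n : ℤ)) * w * (s^4)^n = a * s^(2*n+2) * w := by
    intro w
    rw [← pow_mul, ← zpow_natCast s (4*n), ← zpow_natCast s (2*n+2),
      mul_assoc, mul_comm w, ← mul_assoc, mul_assoc a, ← zpow_add₀ hs]
    congr 2
    push_cast; ring
  have e6 : a * (s^(2*n+2))⁻¹ * z⁻¹ * s^4 = a * s ^ (2 - 2 * (n : ℤ)) * z⁻¹ := by
    rw [← zpow_natCast s (2*n+2), ← zpow_neg, ← zpow_natCast s 4,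
      mul_assoc, mul_comm z⁻¹, ← mul_assoc, mul_assoc a, ← zpow_add₀ hs]
    congr 2
    push_cast; ring
  have e7 : a * (s^(2*n+2))⁻¹ * z * s^4 = a * s ^ (2 - 2 * (n : ℤ)) * z := by
    rw [← zpow_natCast s (2*n+2), ← zpow_neg, ← zpow_natCast s 4,
      mul_assoc, mul_comm z, ← mul_assoc, mul_assoc a, ← zpow_add₀ hs]
    congr 2
    push_cast; ring
  unfold psi4
  rw [e1, e2, e3, e4, qpg_last, qpg_first, qpg_first, qpg_last, e5, e5, e6, e7]
  ring

lemma one_sub_pow_ne (q : ℝ) (hq0 : 0 < q) (hq1 : q < 1) (m : ℕ) (hm : m ≠ 0) :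
    (1 : ℂ) - (q : ℂ) ^ m ≠ 0 := by
  have h : q ^ m < 1 := pow_lt_one₀ hq0.le hq1 hm
  have : ((1 - q ^ m : ℝ) : ℂ) ≠ 0 := by
    rw [Complex.ofReal_ne_zero]
    linarith
  simpa using this

lemma qp_ne (q : ℝ) (hq0 : 0 < q) (hq1 : q < 1) (n : ℕ) : qp ((q : ℂ)) n ≠ 0 := by
  unfold qp
  rw [Finset.prod_ne_zero_iff]
  intro k _
  exact one_sub_pow_ne q hq0 hq1 (k+1) (Nat.succ_ne_zero k)

lemma term_step (q s : ℝ) (hq0 : 0 < q) (hq1 : q < 1) (hs : 0 < s) (hsq : s ^ 4 = q)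
    (a b z : ℂ) (hz : z ≠ 0) (n : ℕ) :
    (s : ℂ) ^ ((n+1) ^ 2) * psi4 a (s : ℂ) (n+1) ((s : ℂ) ^ 2 * z) * b ^ (n+1) / qp ((s : ℂ) ^ 4) (n+1)
      - (s : ℂ) ^ ((n+1) ^ 2) * psi4 a (s : ℂ) (n+1) (z / (s : ℂ) ^ 2) * b ^ (n+1) / qp ((s : ℂ) ^ 4) (n+1)
      = (z - z⁻¹) * (a * b * (s : ℂ)⁻¹) *
        ((s : ℂ) ^ (n ^ 2) * psi4 a (s : ℂ) n z * b ^ n / qp ((s : ℂ) ^ 4) n) := by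
  have hs0 : (s : ℂ) ≠ 0 := by
    simp [Complex.ofReal_ne_zero]; positivity
  have hcast : ((s : ℂ)) ^ 4 = ((q : ℝ) : ℂ) := by
    rw [← hsq]; push_cast; ring
  have hq : qp ((s : ℂ) ^ 4) n ≠ 0 := by rw [hcast]; exact qp_ne q hq0 hq1 n
  have h1 : (1 : ℂ) - ((s : ℂ) ^ 4) ^ (n+1) ≠ 0 := by
    rw [hcast]; exact one_sub_pow_ne q hq0 hq1 (n+1) (Nat.succ_ne_zero n)
  have hm : ((s : ℂ)) ^ (2*n+2) ≠ 0 := pow_ne_zero _ hs0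
  have hqp : qp ((s : ℂ) ^ 4) (n+1) = qp ((s : ℂ) ^ 4) n * (1 - ((s : ℂ) ^ 4) ^ (n+1)) := by
    simp [qp, Finset.prod_range_succ]
  have hp4 : ((s : ℂ) ^ 4) ^ (n+1) = (s : ℂ) ^ (2*n+2) * (s : ℂ) ^ (2*n+2) := by
    rw [← pow_add, ← pow_mul]; congr 1; ring
  have hpow : (s : ℂ) ^ ((n+1) ^ 2) = (s : ℂ) ^ (n ^ 2) * (s : ℂ) ^ (2*n+1) := by
    rw [← pow_add]; congr 1; ring
  have hps : (s : ℂ) ^ (2*n+2) = (s : ℂ) ^ (2*n+1) * (s : ℂ) := by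
    rw [← pow_succ]
  have hXY : (s : ℂ) ^ ((n+1) ^ 2) * ((s : ℂ) ^ (2*n+2))⁻¹ = (s : ℂ) ^ (n ^ 2) * (s : ℂ)⁻¹ := by
    rw [hpow, hps]
    field_simp
  have hY : ((s : ℂ) ^ (2*n+2))⁻¹ - (s : ℂ) ^ (2*n+2)
      = ((s : ℂ) ^ (2*n+2))⁻¹ * (1 - ((s : ℂ) ^ 4) ^ (n+1)) := by
    rw [hp4]
    field_simp
  rw [div_sub_div_same, ← sub_mul, ← mul_sub, psi_step (s : ℂ) z a hs0 hz n, hqp, hY]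
  have key : (s : ℂ) ^ ((n+1) ^ 2) *
        (a * (((s : ℂ) ^ (2*n+2))⁻¹ * (1 - ((s : ℂ) ^ 4) ^ (n+1))) * (z - z⁻¹) * psi4 a (s : ℂ) n z) *
        b ^ (n+1)
      = ((z - z⁻¹) * (a * b * (s : ℂ)⁻¹) * ((s : ℂ) ^ (n ^ 2) * psi4 a (s : ℂ) n z * b ^ n)) *
        (1 - ((s : ℂ) ^ 4) ^ (n+1)) := by
    linear_combination (a * (1 - ((s : ℂ) ^ 4) ^ (n+1)) * (z - z⁻¹) * psi4 a (s : ℂ) n z * b ^ (n+1)) * hXY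
  rw [key, mul_comm (qp ((s : ℂ) ^ 4) n) (1 - ((s : ℂ) ^ 4) ^ (n+1)),
    mul_comm ((z - z⁻¹) * (a * b * (s : ℂ)⁻¹) * ((s : ℂ) ^ (n ^ 2) * psi4 a (s : ℂ) n z * b ^ n))
      (1 - ((s : ℂ) ^ 4) ^ (n+1)),
    mul_div_mul_left _ _ h1, mul_div_assoc]

/-- `E_q(·; a, b)` is an eigenfunction of `τ` with eigenvalue `a b q^{-1/4}`,
where `q = s⁴`, `(τ g)(z) = (g(q^{1/2}z) - g(q^{-1/2}z))/(z - z⁻¹)` and `z = e^{iθ}`. -/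
theorem tau_eigen_qExpE (q s : ℝ) (hq0 : 0 < q) (hq1 : q < 1) (hs : 0 < s)
    (hsq : s ^ 4 = q) (a b : ℂ)
    (hsum : ∀ w : ℂ, Summable fun n : ℕ =>
      (s : ℂ) ^ (n ^ 2) * psi4 a (s : ℂ) n w * b ^ n / qp ((s : ℂ) ^ 4) n)
    (θ : ℝ) (hz1 : Complex.exp (θ * I) ≠ 1) (hz2 : Complex.exp (θ * I) ≠ -1) :
    (qExpE a b (s : ℂ) ((s : ℂ) ^ 2 * Complex.exp (θ * I)) -
        qExpE a b (s : ℂ) (Complex.exp (θ * I) / (s : ℂ) ^ 2)) /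
        (Complex.exp (θ * I) - (Complex.exp (θ * I))⁻¹) =
      a * b * (s : ℂ)⁻¹ * qExpE a b (s : ℂ) (Complex.exp (θ * I)) := by
  set z := Complex.exp (θ * I) with hzdef
  have hz0 : z ≠ 0 := Complex.exp_ne_zero _
  have hden : z - z⁻¹ ≠ 0 := by
    rw [sub_ne_zero]
    intro h
    have h2 : z * z = 1 := by
      nth_rewrite 2 [h]
      exact mul_inv_cancel₀ hz0
    have h3 : (z - 1) * (z + 1) = 0 := by linear_combination h2
    rcases mul_eq_zero.1 h3 with h' | h'
    · exact hz1 (sub_eq_zero.1 h')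
    · exact hz2 (eq_neg_of_add_eq_zero_left h')
  have S1 := hsum ((s : ℂ) ^ 2 * z)
  have S2 := hsum (z / (s : ℂ) ^ 2)
  have Sd := S1.sub S2
  have hE : qExpE a b (s : ℂ) ((s : ℂ) ^ 2 * z) - qExpE a b (s : ℂ) (z / (s : ℂ) ^ 2)
      = ∑' n : ℕ, ((s : ℂ) ^ (n ^ 2) * psi4 a (s : ℂ) n ((s : ℂ) ^ 2 * z) * b ^ n / qp ((s : ℂ) ^ 4) n
          - (s : ℂ) ^ (n ^ 2) * psi4 a (s : ℂ) n (z / (s : ℂ) ^ 2) * b ^ n / qp ((s : ℂ) ^ 4) n) := by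
    unfold qExpE
    exact (Summable.tsum_sub S1 S2).symm
  have hshift := Summable.tsum_eq_zero_add Sd
  have hzero : ((s : ℂ) ^ (0 ^ 2) * psi4 a (s : ℂ) 0 ((s : ℂ) ^ 2 * z) * b ^ 0 / qp ((s : ℂ) ^ 4) 0
      - (s : ℂ) ^ (0 ^ 2) * psi4 a (s : ℂ) 0 (z / (s : ℂ) ^ 2) * b ^ 0 / qp ((s : ℂ) ^ 4) 0) = 0 := by
    simp [psi4, qpg, qp]
  have hstep : (∑' n : ℕ,
      ((s : ℂ) ^ ((n+1) ^ 2) * psi4 a (s : ℂ) (n+1) ((s : ℂ) ^ 2 * z) * b ^ (n+1) / qp ((s : ℂ) ^ 4) (n+1)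
        - (s : ℂ) ^ ((n+1) ^ 2) * psi4 a (s : ℂ) (n+1) (z / (s : ℂ) ^ 2) * b ^ (n+1) / qp ((s : ℂ) ^ 4) (n+1)))
      = (z - z⁻¹) * (a * b * (s : ℂ)⁻¹) * qExpE a b (s : ℂ) z := by
    rw [show (qExpE a b (s : ℂ) z) = ∑' n : ℕ,
      (s : ℂ) ^ (n ^ 2) * psi4 a (s : ℂ) n z * b ^ n / qp ((s : ℂ) ^ 4) n from rfl, ← tsum_mul_left]
    exact tsum_congr fun n => term_step q s hq0 hq1 hs hsq a b z hz0 n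
  rw [hE, hshift, hzero, zero_add, hstep, mul_assoc, mul_comm (z - z⁻¹), mul_div_assoc,
    div_self hden, mul_one]
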